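/- Let ν, ω, σ, e and the constraint functions G^j be as defined in the context. Fix τ ∈ [0,∞) and let V : ℝ^ν → ℝ be of class C¹. For a strictly lower triangular ν×ν real matrix W, let x(W) ∈ ℝ^ν denote the unique forward solution, i.e., x(W)^j = e^j(τ) for j < ω and x(W)^j = σ(Σ_{k<j} w_{jk} x(W)^k) for ω ≤ j < ν, and define the loss F(W) := V(x(W)). Let T be the ν×ν matrix with T_{ij} := ∂G^j/∂ξ^i (τ, x(W), W), and let δ ∈ ℝ^ν be the unique solution of T δ = −∇V(x(W)). Then for every pair (i,j) with ω ≤ i < ν and j < i, the partial derivative of F with respect to the weight w_{ij} satisfies ∂F/∂w_{ij}(W) = −σ'(Σ_k w_{ik} x(W)^k) · δ_i · x(W)^j; that is, the Lagrange-multiplier vector δ coincides with the delta error of the Backpropagation algorithm and the update Ẇ_{ij} = −(1/γ) σ'(w_{ik} x^k) δ_i x^j is gradient descent on F with rate 1/γ. -/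

import Mathlib

/-!
Adjoint method. Put `s_a = Σ_k w_{ak} x^k`, `u = ∂x/∂w_{ij}`, and let `J` be the Jacobian of
`ξ ↦ σ(Σ_k w_{ak} ξ^k)` on the non-input units `a` (zero rows for the input units).
Differentiating the forward recursion gives `(1 - J) u = σ'(s_i) x^j 𝟙_i`, where strict lower
triangularity turns its sums over `k < a` into the full sums of `G`; and `T = (1 - J)ᵀ`. Hence
`∂F/∂w_{ij} = ∇V · u = -(T δ) · u = -δ · (1 - J) u = -σ'(s_i) δ_i x^j`.
-/

/-- The constraint function `G^j(τ, ξ, M)` of the neural network: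
`ξ^j − e^j(τ)` for input units (`j < ω`) and `ξ^j − σ(Σ_k m_{jk} ξ^k)`
for the remaining units. -/
noncomputable def G (ν ω : ℕ) (σ : ℝ → ℝ) (e : ℝ → Fin ω → ℝ)
    (τ : ℝ) (ξ : Fin ν → ℝ) (M : Fin ν → Fin ν → ℝ) (j : Fin ν) : ℝ :=
  if h : (j : ℕ) < ω then ξ j - e τ ⟨(j : ℕ), h⟩
  else ξ j - σ (∑ k, M j k * ξ k)

open Finset Matrix

theorem Matrix.dotProduct_eq_neg_dotProduct_of_mulVec_eq {n R : Type*} [Fintype n]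
    [DecidableEq n] [CommRing R] (D : Matrix n n R) {g δ u b : n → R}
    (hδ : (1 - D)ᵀ *ᵥ δ = -g) (hu : (1 - D) *ᵥ u = b) : g ⬝ᵥ u = -(δ ⬝ᵥ b) := by
  rw [← hu, dotProduct_mulVec, ← mulVec_transpose, hδ, neg_dotProduct, neg_neg]

theorem ContinuousLinearMap.apply_eq_dotProduct {n : Type*} [Fintype n] [DecidableEq n]
    (L : (n → ℝ) →L[ℝ] ℝ) (v : n → ℝ) : L v = (fun a => L (Pi.single a 1)) ⬝ᵥ v := by
  conv_lhs => rw [pi_eq_sum_univ' v, map_sum]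
  simp [dotProduct, mul_comm]

theorem fderiv_comp_apply_eq_dotProduct {n E : Type*} [Fintype n] [DecidableEq n]
    [NormedAddCommGroup E] [NormedSpace ℝ E] {V : (n → ℝ) → ℝ} {f : E → n → ℝ} {w : E}
    (hV : DifferentiableAt ℝ V (f w)) (hf : ∀ a, DifferentiableAt ℝ (f · a) w) (v : E) :
    fderiv ℝ (fun w' => V (f w')) w v
      = (fun a => fderiv ℝ V (f w) (Pi.single a 1)) ⬝ᵥ fun a => fderiv ℝ (f · a) w v := by
  rw [fderiv_fun_comp w hV (differentiableAt_pi.mpr hf), ContinuousLinearMap.comp_apply,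
    ContinuousLinearMap.apply_eq_dotProduct, fderiv_pi hf]
  rfl

variable {ν ω : ℕ} {σ : ℝ → ℝ}

theorem hasFDerivAt_sum_mul_apply (m ξ : Fin ν → ℝ) :
    HasFDerivAt (fun ξ' => ∑ k, m k * ξ' k)
      (∑ k, m k • (ContinuousLinearMap.proj k : (Fin ν → ℝ) →L[ℝ] ℝ)) ξ :=
  HasFDerivAt.fun_sum fun k _ => (hasFDerivAt_apply k ξ).const_mul _

theorem hasFDerivAt_apply_apply (a k : Fin ν) (W : Fin ν → Fin ν → ℝ) :
    HasFDerivAt (fun W' : Fin ν → Fin ν → ℝ => W' a k)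
      ((ContinuousLinearMap.proj k : (Fin ν → ℝ) →L[ℝ] ℝ).comp
        (ContinuousLinearMap.proj a : (Fin ν → Fin ν → ℝ) →L[ℝ] (Fin ν → ℝ))) W :=
  ((ContinuousLinearMap.proj k : (Fin ν → ℝ) →L[ℝ] ℝ).comp
    (ContinuousLinearMap.proj a : (Fin ν → Fin ν → ℝ) →L[ℝ] (Fin ν → ℝ))).hasFDerivAt

theorem sum_filter_lt_eq_sum {W : Fin ν → Fin ν → ℝ} (hW : ∀ a k, a ≤ k → W a k = 0)
    (a : Fin ν) (v : Fin ν → ℝ) :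
    ∑ k ∈ univ.filter (· < a), W a k * v k = ∑ k, W a k * v k :=
  sum_filter_of_ne fun k _ hk => not_le.mp fun hak => hk (by rw [hW a k hak, zero_mul])

noncomputable def activationJacobian (ω : ℕ) (σ : ℝ → ℝ) (M : Fin ν → Fin ν → ℝ)
    (ξ : Fin ν → ℝ) : Matrix (Fin ν) (Fin ν) ℝ :=
  of fun a k => if ω ≤ (a : ℕ) then deriv σ (∑ l, M a l * ξ l) * M a k else 0

theorem fderiv_G_apply_single {e : ℝ → Fin ω → ℝ} {τ : ℝ} {M : Fin ν → Fin ν → ℝ}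
    {ξ : Fin ν → ℝ} (hσ : Differentiable ℝ σ) (a b : Fin ν) :
    fderiv ℝ (fun ξ' => G ν ω σ e τ ξ' M b) ξ (Pi.single a 1)
      = (1 - activationJacobian ω σ M ξ) b a := by
  by_cases hb : (b : ℕ) < ω
  · have hG : HasFDerivAt (fun ξ' => G ν ω σ e τ ξ' M b)
        (ContinuousLinearMap.proj b : (Fin ν → ℝ) →L[ℝ] ℝ) ξ := by
      simp only [G, dif_pos hb]
      exact (hasFDerivAt_apply b ξ).sub_const _
    simp [hG.fderiv, activationJacobian, not_le.mpr hb, Pi.single_apply, one_apply, eq_comm]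
  · have hG : HasFDerivAt (fun ξ' => G ν ω σ e τ ξ' M b)
        ((ContinuousLinearMap.proj b : (Fin ν → ℝ) →L[ℝ] ℝ) - deriv σ (∑ k, M b k * ξ k) •
          ∑ k, M b k • (ContinuousLinearMap.proj k : (Fin ν → ℝ) →L[ℝ] ℝ)) ξ := by
      simp only [G, dif_neg hb]
      exact (hasFDerivAt_apply b ξ).sub
        ((hσ _).hasDerivAt.comp_hasFDerivAt ξ (hasFDerivAt_sum_mul_apply _ ξ))
    simp [hG.fderiv, activationJacobian, not_lt.mp hb, Pi.single_apply, one_apply, eq_comm]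

def IsForwardSolution (ω : ℕ) (σ : ℝ → ℝ) (input : Fin ω → ℝ)
    (x : (Fin ν → Fin ν → ℝ) → Fin ν → ℝ) : Prop :=
  ∀ W, (∀ j : Fin ν, ∀ h : (j : ℕ) < ω, x W j = input ⟨j, h⟩) ∧
    ∀ j : Fin ν, ω ≤ (j : ℕ) → x W j = σ (∑ k ∈ univ.filter (· < j), W j k * x W k)

namespace IsForwardSolution

variable {input : Fin ω → ℝ} {x : (Fin ν → Fin ν → ℝ) → Fin ν → ℝ}

theorem coord_eq_of_lt (hx : IsForwardSolution ω σ input x) {a : Fin ν} (ha : (a : ℕ) < ω) :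
    (fun W => x W a) = fun _ => input ⟨a, ha⟩ :=
  funext fun W => (hx W).1 a ha

theorem coord_eq_of_le (hx : IsForwardSolution ω σ input x) {a : Fin ν} (ha : ω ≤ (a : ℕ)) :
    (fun W => x W a) = fun W => σ (∑ k ∈ univ.filter (· < a), W a k * x W k) :=
  funext fun W => (hx W).2 a ha

theorem differentiable (hx : IsForwardSolution ω σ input x) (hσ : Differentiable ℝ σ)
    (a : Fin ν) : Differentiable ℝ fun W => x W a := by
  induction a using WellFoundedLT.induction with
  | _ a ih =>
    by_cases ha : (a : ℕ) < ω
    · rw [hx.coord_eq_of_lt ha]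
      exact differentiable_const _
    · rw [hx.coord_eq_of_le (not_lt.mp ha)]
      exact hσ.comp (Differentiable.fun_sum fun k hk W =>
        (hasFDerivAt_apply_apply a k W).differentiableAt.mul (ih k (mem_filter.mp hk).2 W))

theorem fderiv_coord_of_le (hx : IsForwardSolution ω σ input x) (hσ : Differentiable ℝ σ)
    {a : Fin ν} (ha : ω ≤ (a : ℕ)) (W E : Fin ν → Fin ν → ℝ) :
    fderiv ℝ (fun W => x W a) W E = deriv σ (∑ k ∈ univ.filter (· < a), W a k * x W k) *
      ∑ k ∈ univ.filter (· < a), (W a k * fderiv ℝ (fun W => x W k) W E + x W k * E a k) := by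
  have hsum : HasFDerivAt (fun W' => ∑ k ∈ univ.filter (· < a), W' a k * x W' k)
      (∑ k ∈ univ.filter (· < a), (W a k • fderiv ℝ (fun W => x W k) W +
        x W k • (ContinuousLinearMap.proj k : (Fin ν → ℝ) →L[ℝ] ℝ).comp
          (ContinuousLinearMap.proj a : (Fin ν → Fin ν → ℝ) →L[ℝ] (Fin ν → ℝ)))) W :=
    HasFDerivAt.fun_sum fun k _ =>
      (hasFDerivAt_apply_apply a k W).mul (hx.differentiable hσ k W).hasFDerivAt
  rw [hx.coord_eq_of_le ha, ← Function.comp_def σ,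
    ((hσ _).hasDerivAt.comp_hasFDerivAt W hsum).fderiv]
  simp

theorem one_sub_activationJacobian_mulVec_fderiv (hx : IsForwardSolution ω σ input x)
    (hσ : Differentiable ℝ σ) {W : Fin ν → Fin ν → ℝ} (hW : ∀ a k, a ≤ k → W a k = 0)
    (E : Fin ν → Fin ν → ℝ) :
    (1 - activationJacobian ω σ W (x W)) *ᵥ (fun a => fderiv ℝ (fun W => x W a) W E)
      = fun a : Fin ν => if ω ≤ (a : ℕ) then
          deriv σ (∑ k, W a k * x W k) * ∑ k ∈ univ.filter (· < a), x W k * E a k else 0 := by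
  funext a
  rw [sub_mulVec, one_mulVec, Pi.sub_apply]
  by_cases ha : ω ≤ (a : ℕ)
  · rw [hx.fderiv_coord_of_le hσ ha, sum_add_distrib, sum_filter_lt_eq_sum hW,
      sum_filter_lt_eq_sum hW]
    simp only [activationJacobian, ha, if_true, mulVec, dotProduct, of_apply, mul_assoc,
      ← mul_sum]
    ring
  · simp [activationJacobian, ha, mulVec, hx.coord_eq_of_lt (not_le.mp ha)]

end IsForwardSolution

theorem backprop_reduction_general
    (ν ω : ℕ)
    (σ : ℝ → ℝ) (hσ : ContDiff ℝ 2 σ)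
    (e : ℝ → Fin ω → ℝ)
    (τ : ℝ)
    (V : (Fin ν → ℝ) → ℝ) (hV : ContDiff ℝ 1 V)
    (x : (Fin ν → Fin ν → ℝ) → Fin ν → ℝ)
    (hx : ∀ W' : Fin ν → Fin ν → ℝ,
      (∀ j : Fin ν, ∀ h : (j : ℕ) < ω, x W' j = e τ ⟨(j : ℕ), h⟩) ∧
      (∀ j : Fin ν, ω ≤ (j : ℕ) →
        x W' j = σ (∑ k ∈ Finset.univ.filter (fun k : Fin ν => k < j),
          W' j k * x W' k)))
    (W : Fin ν → Fin ν → ℝ) (hW : ∀ i j : Fin ν, i ≤ j → W i j = 0)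
    (F : (Fin ν → Fin ν → ℝ) → ℝ) (hF : F = fun W' => V (x W'))
    (T : Matrix (Fin ν) (Fin ν) ℝ)
    (hT : T = Matrix.of fun i j =>
      fderiv ℝ (fun ξ' => G ν ω σ e τ ξ' W j) (x W) (Pi.single i 1))
    (δ : Fin ν → ℝ)
    (hδ : T.mulVec δ = -(fun a => fderiv ℝ V (x W) (Pi.single a 1))) :
    ∀ i j : Fin ν, ω ≤ (i : ℕ) → j < i →
      fderiv ℝ F W (Pi.single i (Pi.single j 1))
        = -(deriv σ (∑ k, W i k * x W k) * δ i * x W j) := by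
  intro i j hi hji
  have hσ' : Differentiable ℝ σ := hσ.differentiable two_ne_zero
  have hfwd : IsForwardSolution ω σ (e τ) x := hx
  have hTJ : T = (1 - activationJacobian ω σ W (x W))ᵀ := by
    rw [hT]
    ext a b
    exact fderiv_G_apply_single hσ' a b
  have htangent : (1 - activationJacobian ω σ W (x W)) *ᵥ
      (fun a => fderiv ℝ (fun W => x W a) W (Pi.single i (Pi.single j 1)))
        = Pi.single i (deriv σ (∑ k, W i k * x W k) * x W j) := by
    rw [hfwd.one_sub_activationJacobian_mulVec_fderiv hσ' hW]
    funext a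
    by_cases ha : a = i
    · subst ha
      simp [hi, hji, Pi.single_apply]
    · simp [ha]
  rw [hF, fderiv_comp_apply_eq_dotProduct (hV.differentiable one_ne_zero _)
      (fun a => hfwd.differentiable hσ' a W),
    dotProduct_eq_neg_dotProduct_of_mulVec_eq _ (hTJ ▸ hδ) htangent, dotProduct_single]
  ring

/-- let `x(W')` be the forward solution of the network
(`x^j = e^j(τ)` for `j < ω`, `x^j = σ(Σ_{k<j} w'_{jk} x^k)` otherwise),
`F(W') := V(x(W'))`, `T_{ij} := ∂G^j/∂ξ^i (τ, x(W), W)` and let `δ` solve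
`T δ = −∇V(x(W))`. Then for every weight `w_{ij}` (with `ω ≤ i` and `j < i`)
`∂F/∂w_{ij}(W) = −σ'(Σ_k w_{ik} x(W)^k) · δ_i · x(W)^j`: the
Lagrange-multiplier vector `δ` is the delta error of Backpropagation, and
`Ẇ_{ij} = −(1/γ) σ'(w_{ik}x^k) δ_i x^j` is gradient descent on `F`. -/
theorem backprop_reduction
    (ν ω : ℕ) (hω : 0 < ω) (hων : ω ≤ ν)
    (σ : ℝ → ℝ) (hσ : ContDiff ℝ 2 σ)
    (e : ℝ → Fin ω → ℝ) (he : ContDiffOn ℝ 1 e (Set.Ici 0))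
    (τ : ℝ) (hτ : 0 ≤ τ)
    (V : (Fin ν → ℝ) → ℝ) (hV : ContDiff ℝ 1 V)
    (x : (Fin ν → Fin ν → ℝ) → Fin ν → ℝ)
    (hx : ∀ W' : Fin ν → Fin ν → ℝ,
      (∀ j : Fin ν, ∀ h : (j : ℕ) < ω, x W' j = e τ ⟨(j : ℕ), h⟩) ∧
      (∀ j : Fin ν, ω ≤ (j : ℕ) →
        x W' j = σ (∑ k ∈ Finset.univ.filter (fun k : Fin ν => k < j),
          W' j k * x W' k)))
    (W : Fin ν → Fin ν → ℝ) (hW : ∀ i j : Fin ν, i ≤ j → W i j = 0)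
    (F : (Fin ν → Fin ν → ℝ) → ℝ) (hF : F = fun W' => V (x W'))
    (T : Matrix (Fin ν) (Fin ν) ℝ)
    (hT : T = Matrix.of fun i j =>
      fderiv ℝ (fun ξ' => G ν ω σ e τ ξ' W j) (x W) (Pi.single i 1))
    (δ : Fin ν → ℝ)
    (hδ : T.mulVec δ = -(fun a => fderiv ℝ V (x W) (Pi.single a 1))) :
    ∀ i j : Fin ν, ω ≤ (i : ℕ) → j < i →
      fderiv ℝ F W (Pi.single i (Pi.single j 1))
        = -(deriv σ (∑ k, W i k * x W k) * δ i * x W j) :=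
  backprop_reduction_general ν ω σ hσ e τ V hV x hx W hW F hF T hT δ hδ
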